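/- Let θ₁ + θ₂ = 2α₂ with θ₁, θ₂ > 0, α₂ ≥ 1. Define the low-frequency interaction term b₁₀(x,t) = -(r^{-β₁-β₂}/2) ∫_0^t ∑_{i=1}^r |k_i|^{θ₁}|k'_i|^{θ₂} e^{-(|k_i|^{2α₂}+|k'_i|^{2α₂})τ} e^{-(t-τ)} dτ · sin(η·x) v', with |k_i| = 2^{i-1}K integers ≥ 2, |k'_i|² = |k_i|² + 1, |η| = 1. Then ‖b₁₀(·,t)‖_{L^∞} ≤ C r^{1-β₁-β₂} for all t > 0, and ‖b₁₀(·,t)‖_{L^∞} ≥ c r^{1-β₁-β₂} for all t with |k_1|^{-2α₂} ≤ t ≤ 1, with constants depending only on α₂, θ₁, θ₂. -/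
import Mathlib

open Finset

noncomputable def b10 (θ₁ θ₂ α₂ : ℝ) (K r : ℕ) (β₁ β₂ : ℝ) (t : ℝ)
    (x : Fin 3 → ℝ) : ℝ :=
  -(((r : ℝ) ^ (-(β₁ + β₂)) / 2) *
    (∑ i ∈ Finset.range r,
      ((2 : ℝ) ^ i * (K : ℝ)) ^ θ₁ *
        (Real.sqrt (((2 : ℝ) ^ i * (K : ℝ)) ^ 2 + 1)) ^ θ₂ *
        Real.exp (-t) *
        (1 - Real.exp (-((((2 : ℝ) ^ i * (K : ℝ)) ^ (2 * α₂) +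
          (Real.sqrt (((2 : ℝ) ^ i * (K : ℝ)) ^ 2 + 1)) ^ (2 * α₂)) - 1) * t)) /
        ((((2 : ℝ) ^ i * (K : ℝ)) ^ (2 * α₂) +
          (Real.sqrt (((2 : ℝ) ^ i * (K : ℝ)) ^ 2 + 1)) ^ (2 * α₂)) - 1)) *
    Real.sin (x 2))


lemma aux_exp_le_one {x : ℝ} (hx : x ≤ 0) : Real.exp x ≤ 1 := by
  simpa using Real.exp_le_exp.mpr hx

lemma aux_rpow_two (x : ℝ) (α : ℝ) (hx : 0 ≤ x) : x ^ (2*α) = (x^2) ^ α := by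
  rw [Real.rpow_mul hx, show (2:ℝ) = ((2:ℕ):ℝ) by norm_num, Real.rpow_natCast]

lemma term_upper (α₂ θ₁ θ₂ : ℝ) (hα : 1 ≤ α₂) (h1 : 0 < θ₁) (h2 : 0 < θ₂)
    (hsum : θ₁ + θ₂ = 2 * α₂) (k : ℝ) (hk : 2 ≤ k) (t : ℝ) (ht : 0 < t) :
    0 ≤ k ^ θ₁ * (Real.sqrt (k ^ 2 + 1)) ^ θ₂ * Real.exp (-t) *
        (1 - Real.exp (-((k ^ (2 * α₂) + (Real.sqrt (k ^ 2 + 1)) ^ (2 * α₂)) - 1) * t)) /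
        ((k ^ (2 * α₂) + (Real.sqrt (k ^ 2 + 1)) ^ (2 * α₂)) - 1) ∧
    k ^ θ₁ * (Real.sqrt (k ^ 2 + 1)) ^ θ₂ * Real.exp (-t) *
        (1 - Real.exp (-((k ^ (2 * α₂) + (Real.sqrt (k ^ 2 + 1)) ^ (2 * α₂)) - 1) * t)) /
        ((k ^ (2 * α₂) + (Real.sqrt (k ^ 2 + 1)) ^ (2 * α₂)) - 1) ≤ 2 := by
  have hk0 : (0:ℝ) < k := by linarith
  set s := Real.sqrt (k ^ 2 + 1) with hs_def
  have hs_sq : s ^ 2 = k ^ 2 + 1 := Real.sq_sqrt (by positivity)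
  have hs0 : 0 < s := Real.sqrt_pos.mpr (by positivity)
  have hks : k ≤ s := by nlinarith [hs_sq, hs0]
  have hk2 : (4:ℝ) ≤ k ^ 2 := by nlinarith
  have hkα : (4:ℝ) ≤ k ^ (2*α₂) := by
    rw [aux_rpow_two k α₂ hk0.le]
    calc (4:ℝ) = (k^2) ^ (0:ℝ) * 4 := by rw [Real.rpow_zero]; ring
      _ ≤ (k^2) ^ α₂ := by
          calc (k^2) ^ (0:ℝ) * 4 ≤ (k^2) ^ (1:ℝ) := by
                rw [Real.rpow_zero, Real.rpow_one]; linarith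
            _ ≤ (k^2) ^ α₂ := Real.rpow_le_rpow_of_exponent_le (by linarith) hα
  have hsα : k ^ (2*α₂) ≤ s ^ (2*α₂) := Real.rpow_le_rpow hk0.le hks (by linarith)
  have hD1 : 0 < (k ^ (2*α₂) + s ^ (2*α₂)) - 1 := by linarith
  have hA0 : 0 ≤ k ^ θ₁ * s ^ θ₂ :=
    mul_nonneg (Real.rpow_nonneg hk0.le _) (Real.rpow_nonneg hs0.le _)
  have hA_le : k ^ θ₁ * s ^ θ₂ ≤ s ^ (2*α₂) := by
    have h1' : k ^ θ₁ ≤ s ^ θ₁ := Real.rpow_le_rpow hk0.le hks h1.le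
    have step : k ^ θ₁ * s ^ θ₂ ≤ s ^ θ₁ * s ^ θ₂ :=
      mul_le_mul_of_nonneg_right h1' (Real.rpow_nonneg hs0.le _)
    rwa [← Real.rpow_add hs0, hsum] at step
  have het : Real.exp (-t) ≤ 1 := aux_exp_le_one (by linarith)
  have hxneg : (-((k ^ (2*α₂) + s ^ (2*α₂)) - 1) * t) ≤ 0 := by nlinarith
  have hx0 : 0 ≤ 1 - Real.exp (-((k ^ (2*α₂) + s ^ (2*α₂)) - 1) * t) :=
    sub_nonneg.mpr (aux_exp_le_one hxneg)
  have hx1 : 1 - Real.exp (-((k ^ (2*α₂) + s ^ (2*α₂)) - 1) * t) ≤ 1 := by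
    have := Real.exp_pos (-((k ^ (2*α₂) + s ^ (2*α₂)) - 1) * t)
    linarith
  constructor
  · exact div_nonneg (mul_nonneg (mul_nonneg hA0 (Real.exp_pos _).le) hx0) hD1.le
  · rw [div_le_iff₀ hD1]
    calc k ^ θ₁ * s ^ θ₂ * Real.exp (-t) *
          (1 - Real.exp (-((k ^ (2*α₂) + s ^ (2*α₂)) - 1) * t))
        ≤ k ^ θ₁ * s ^ θ₂ * Real.exp (-t) * 1 :=
          mul_le_mul_of_nonneg_left hx1 (by positivity)
      _ = k ^ θ₁ * s ^ θ₂ * Real.exp (-t) := mul_one _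
      _ ≤ k ^ θ₁ * s ^ θ₂ * 1 := mul_le_mul_of_nonneg_left het hA0
      _ = k ^ θ₁ * s ^ θ₂ := mul_one _
      _ ≤ s ^ (2*α₂) := hA_le
      _ ≤ 2 * ((k ^ (2*α₂) + s ^ (2*α₂)) - 1) := by linarith

lemma term_lower (α₂ θ₁ θ₂ : ℝ) (hα : 1 ≤ α₂) (h1 : 0 < θ₁) (h2 : 0 < θ₂)
    (hsum : θ₁ + θ₂ = 2 * α₂) (K : ℕ) (hK : 2 ≤ (K:ℝ)) (k : ℝ) (hKk : (K:ℝ) ≤ k)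
    (t : ℝ) (ht1 : (K : ℝ) ^ (-(2 * α₂)) ≤ t) (ht2 : t ≤ 1) :
    Real.exp (-1) * (1 - Real.exp (-1)) / (1 + (2:ℝ) ^ α₂) ≤
    k ^ θ₁ * (Real.sqrt (k ^ 2 + 1)) ^ θ₂ * Real.exp (-t) *
        (1 - Real.exp (-((k ^ (2 * α₂) + (Real.sqrt (k ^ 2 + 1)) ^ (2 * α₂)) - 1) * t)) /
        ((k ^ (2 * α₂) + (Real.sqrt (k ^ 2 + 1)) ^ (2 * α₂)) - 1) := by
  have hk : (2:ℝ) ≤ k := le_trans hK hKk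
  have hk0 : (0:ℝ) < k := by linarith
  have hKpos : (0:ℝ) < (K:ℝ) := by linarith
  have hK2α : 0 < (K:ℝ) ^ (2*α₂) := Real.rpow_pos_of_pos hKpos _
  have ht0 : 0 < t := lt_of_lt_of_le (Real.rpow_pos_of_pos hKpos _) ht1
  set s := Real.sqrt (k ^ 2 + 1) with hs_def
  have hs_sq : s ^ 2 = k ^ 2 + 1 := Real.sq_sqrt (by positivity)
  have hs0 : 0 < s := Real.sqrt_pos.mpr (by positivity)
  have hks : k ≤ s := by nlinarith [hs_sq, hs0]
  have hs1 : 1 ≤ s := by linarith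
  have hk2 : (4:ℝ) ≤ k ^ 2 := by nlinarith
  have hkα : (4:ℝ) ≤ k ^ (2*α₂) := by
    rw [aux_rpow_two k α₂ hk0.le]
    calc (4:ℝ) ≤ (k^2) ^ (1:ℝ) := by rw [Real.rpow_one]; linarith
      _ ≤ (k^2) ^ α₂ := Real.rpow_le_rpow_of_exponent_le (by linarith) hα
  have hsα : k ^ (2*α₂) ≤ s ^ (2*α₂) := Real.rpow_le_rpow hk0.le hks (by linarith)
  have hs2α1 : 1 ≤ s ^ (2*α₂) := by linarith
  have hD1 : 0 < (k ^ (2*α₂) + s ^ (2*α₂)) - 1 := by linarith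
  have hDk : k ^ (2*α₂) ≤ (k ^ (2*α₂) + s ^ (2*α₂)) - 1 := by linarith
  -- D ≤ (1+2^α₂) k^{2α₂}
  have h2α : 0 < (2:ℝ) ^ α₂ := Real.rpow_pos_of_pos two_pos _
  have hs2a : s ^ (2*α₂) = (k^2+1) ^ α₂ := by rw [aux_rpow_two s α₂ hs0.le, hs_sq]
  have hstep1 : ((k^2+1:ℝ)) ^ α₂ ≤ ((2*k^2:ℝ)) ^ α₂ :=
    Real.rpow_le_rpow (by positivity) (by nlinarith) (by linarith)
  have hstep2 : ((2*k^2:ℝ)) ^ α₂ = (2:ℝ)^α₂ * (k^2) ^ α₂ :=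
    Real.mul_rpow (by norm_num) (by positivity)
  have hsle : s ^ (2*α₂) ≤ (2:ℝ)^α₂ * k ^ (2*α₂) := by
    rw [aux_rpow_two k α₂ hk0.le, hs2a]
    exact hstep1.trans hstep2.le
  have hDle : (k ^ (2*α₂) + s ^ (2*α₂)) ≤ (1 + (2:ℝ)^α₂) * k ^ (2*α₂) := by
    nlinarith [hsle, h2α, hkα]
  -- (D-1)*t ≥ 1
  have hkK : (K:ℝ) ^ (2*α₂) ≤ k ^ (2*α₂) := Real.rpow_le_rpow hKpos.le hKk (by linarith)
  have hinv : ((K:ℝ) ^ (2*α₂))⁻¹ ≤ t := by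
    rwa [← Real.rpow_neg hKpos.le] 
  have h1Dt : 1 ≤ ((k ^ (2*α₂) + s ^ (2*α₂)) - 1) * t := by
    calc (1:ℝ) = (K:ℝ) ^ (2*α₂) * ((K:ℝ) ^ (2*α₂))⁻¹ := (mul_inv_cancel₀ hK2α.ne').symm
      _ ≤ ((k ^ (2*α₂) + s ^ (2*α₂)) - 1) * t :=
          mul_le_mul (hkK.trans hDk) hinv (inv_nonneg.mpr hK2α.le) (by linarith)
  have heD : Real.exp (-((k ^ (2*α₂) + s ^ (2*α₂)) - 1) * t) ≤ Real.exp (-1) :=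
    Real.exp_le_exp.mpr (by nlinarith)
  have het : Real.exp (-1) ≤ Real.exp (-t) := Real.exp_le_exp.mpr (by linarith)
  have he1 : Real.exp (-1) < 1 := by
    have := Real.exp_lt_exp.mpr (show (-1:ℝ) < 0 by norm_num)
    simpa using this
  have hE0 : 0 < Real.exp (-1) * (1 - Real.exp (-1)) :=
    mul_pos (Real.exp_pos _) (by linarith)
  -- A ≥ k^{2α₂}
  have hA_ge : k ^ (2*α₂) ≤ k ^ θ₁ * s ^ θ₂ := by
    rw [← hsum, Real.rpow_add hk0]
    exact mul_le_mul_of_nonneg_left (Real.rpow_le_rpow hk0.le hks h2.le)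
      (Real.rpow_nonneg hk0.le _)
  -- N lower bound
  have hNlow : k ^ (2*α₂) * (Real.exp (-1) * (1 - Real.exp (-1))) ≤
      k ^ θ₁ * s ^ θ₂ * Real.exp (-t) *
        (1 - Real.exp (-((k ^ (2*α₂) + s ^ (2*α₂)) - 1) * t)) := by
    have hfac : 1 - Real.exp (-1) ≤ 1 - Real.exp (-((k ^ (2*α₂) + s ^ (2*α₂)) - 1) * t) := by
      linarith
    calc k ^ (2*α₂) * (Real.exp (-1) * (1 - Real.exp (-1)))
        = (k ^ (2*α₂) * Real.exp (-1)) * (1 - Real.exp (-1)) := by ring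
      _ ≤ (k ^ θ₁ * s ^ θ₂ * Real.exp (-t)) * (1 - Real.exp (-1)) := by
          apply mul_le_mul_of_nonneg_right _ (by linarith)
          exact mul_le_mul hA_ge het (Real.exp_pos _).le
            (by positivity)
      _ ≤ (k ^ θ₁ * s ^ θ₂ * Real.exp (-t)) *
            (1 - Real.exp (-((k ^ (2*α₂) + s ^ (2*α₂)) - 1) * t)) := by
          apply mul_le_mul_of_nonneg_left hfac (by positivity)
  rw [div_le_div_iff₀ (by positivity) hD1]
  calc Real.exp (-1) * (1 - Real.exp (-1)) * ((k ^ (2*α₂) + s ^ (2*α₂)) - 1)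
      ≤ Real.exp (-1) * (1 - Real.exp (-1)) * ((1 + (2:ℝ)^α₂) * k ^ (2*α₂)) := by
        apply mul_le_mul_of_nonneg_left (by linarith) hE0.le
    _ = (k ^ (2*α₂) * (Real.exp (-1) * (1 - Real.exp (-1)))) * (1 + (2:ℝ)^α₂) := by ring
    _ ≤ k ^ θ₁ * s ^ θ₂ * Real.exp (-t) *
          (1 - Real.exp (-((k ^ (2*α₂) + s ^ (2*α₂)) - 1) * t)) * (1 + (2:ℝ)^α₂) :=
        mul_le_mul_of_nonneg_right hNlow (by positivity)


/-- `‖b₁₀(·,t)‖_∞ ≤ C r^{1-β₁-β₂}` for all `t > 0`, and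
`‖b₁₀(·,t)‖_∞ ≥ c r^{1-β₁-β₂}` for `|k_1|^{-2α₂} ≤ t ≤ 1`, with constants
depending only on `α₂, θ₁, θ₂` (where `θ₁ + θ₂ = 2α₂`). -/
theorem stmt_14 (α₂ θ₁ θ₂ : ℝ) (hα : 1 ≤ α₂) (h1 : 0 < θ₁) (h2 : 0 < θ₂)
    (hsum : θ₁ + θ₂ = 2 * α₂) :
    ∃ c C : ℝ, 0 < c ∧ 0 < C ∧
      ∀ (K : ℕ), 2 ≤ K → ∀ (r : ℕ), 1 ≤ r → ∀ β₁ β₂ : ℝ,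
        (∀ t : ℝ, 0 < t → ∀ x : Fin 3 → ℝ,
          |b10 θ₁ θ₂ α₂ K r β₁ β₂ t x| ≤ C * (r : ℝ) ^ (1 - β₁ - β₂)) ∧
        (∀ t : ℝ, (K : ℝ) ^ (-(2 * α₂)) ≤ t → t ≤ 1 →
          c * (r : ℝ) ^ (1 - β₁ - β₂) ≤
            ⨆ x : Fin 3 → ℝ, |b10 θ₁ θ₂ α₂ K r β₁ β₂ t x|) := by
  have he1 : Real.exp (-1) < 1 := by
    have := Real.exp_lt_exp.mpr (show (-1:ℝ) < 0 by norm_num)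
    simpa using this
  have h2α : 0 < (2:ℝ) ^ α₂ := Real.rpow_pos_of_pos two_pos _
  set c₀ : ℝ := Real.exp (-1) * (1 - Real.exp (-1)) / (1 + (2:ℝ) ^ α₂) with hc₀
  have hc₀0 : 0 < c₀ :=
    div_pos (mul_pos (Real.exp_pos _) (by linarith)) (by positivity)
  refine ⟨c₀ / 2, 1, by positivity, one_pos, ?_⟩
  intro K hK r hr β₁ β₂
  have hK2 : (2:ℝ) ≤ (K:ℝ) := by exact_mod_cast hK
  have hr0 : (0:ℝ) < (r:ℝ) := by exact_mod_cast Nat.lt_of_lt_of_le Nat.zero_lt_one hr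
  have hP0 : 0 ≤ (r:ℝ) ^ (-(β₁ + β₂)) / 2 := by positivity
  have hrpow : (r:ℝ) ^ (-(β₁ + β₂)) * (r:ℝ) = (r:ℝ) ^ (1 - β₁ - β₂) := by
    have h := Real.rpow_add hr0 (-(β₁+β₂)) 1
    rw [Real.rpow_one] at h
    rw [← h, show -(β₁+β₂)+1 = 1-β₁-β₂ by ring]
  have hki : ∀ i : ℕ, (2:ℝ) ≤ (2:ℝ) ^ i * (K:ℝ) := by
    intro i
    have h1i : (1:ℝ) ≤ (2:ℝ) ^ i := one_le_pow₀ (by norm_num)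
    nlinarith
  have hKki : ∀ i : ℕ, (K:ℝ) ≤ (2:ℝ) ^ i * (K:ℝ) := by
    intro i
    have h1i : (1:ℝ) ≤ (2:ℝ) ^ i := one_le_pow₀ (by norm_num)
    nlinarith
  constructor
  · -- upper bound
    intro t ht x
    have hterm := fun i (_ : i ∈ Finset.range r) =>
      term_upper α₂ θ₁ θ₂ hα h1 h2 hsum ((2:ℝ) ^ i * (K:ℝ)) (hki i) t ht
    have hS0 : 0 ≤ ∑ i ∈ Finset.range r,
        ((2 : ℝ) ^ i * (K : ℝ)) ^ θ₁ *
        (Real.sqrt (((2 : ℝ) ^ i * (K : ℝ)) ^ 2 + 1)) ^ θ₂ *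
        Real.exp (-t) *
        (1 - Real.exp (-((((2 : ℝ) ^ i * (K : ℝ)) ^ (2 * α₂) +
          (Real.sqrt (((2 : ℝ) ^ i * (K : ℝ)) ^ 2 + 1)) ^ (2 * α₂)) - 1) * t)) /
        ((((2 : ℝ) ^ i * (K : ℝ)) ^ (2 * α₂) +
          (Real.sqrt (((2 : ℝ) ^ i * (K : ℝ)) ^ 2 + 1)) ^ (2 * α₂)) - 1) :=
      Finset.sum_nonneg (fun i hi => (hterm i hi).1)
    have hSle : (∑ i ∈ Finset.range r,
        ((2 : ℝ) ^ i * (K : ℝ)) ^ θ₁ *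
        (Real.sqrt (((2 : ℝ) ^ i * (K : ℝ)) ^ 2 + 1)) ^ θ₂ *
        Real.exp (-t) *
        (1 - Real.exp (-((((2 : ℝ) ^ i * (K : ℝ)) ^ (2 * α₂) +
          (Real.sqrt (((2 : ℝ) ^ i * (K : ℝ)) ^ 2 + 1)) ^ (2 * α₂)) - 1) * t)) /
        ((((2 : ℝ) ^ i * (K : ℝ)) ^ (2 * α₂) +
          (Real.sqrt (((2 : ℝ) ^ i * (K : ℝ)) ^ 2 + 1)) ^ (2 * α₂)) - 1))
        ≤ (r:ℝ) * 2 := by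
      calc _ ≤ ∑ _i ∈ Finset.range r, (2:ℝ) :=
            Finset.sum_le_sum (fun i hi => (hterm i hi).2)
        _ = (r:ℝ) * 2 := by rw [Finset.sum_const, Finset.card_range, nsmul_eq_mul]
    rw [b10, abs_neg, abs_mul, abs_mul, abs_of_nonneg hP0, abs_of_nonneg hS0, one_mul]
    calc _ ≤ (r:ℝ) ^ (-(β₁ + β₂)) / 2 * ((r:ℝ) * 2) * 1 := by
          apply mul_le_mul (mul_le_mul_of_nonneg_left hSle hP0) (abs_le.mpr ⟨by linarith [Real.neg_one_le_sin (x 2)], Real.sin_le_one (x 2)⟩)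
            (abs_nonneg _) (by positivity)
      _ = (r:ℝ) ^ (-(β₁ + β₂)) * (r:ℝ) := by ring
      _ = (r:ℝ) ^ (1 - β₁ - β₂) := hrpow
  · -- lower bound
    intro t ht1 ht2
    have ht0 : 0 < t := lt_of_lt_of_le (Real.rpow_pos_of_pos (by linarith) _) ht1
    have hterm := fun i (_ : i ∈ Finset.range r) =>
      term_lower α₂ θ₁ θ₂ hα h1 h2 hsum K hK2 ((2:ℝ) ^ i * (K:ℝ)) (hKki i) t ht1 ht2
    set S := ∑ i ∈ Finset.range r,
        ((2 : ℝ) ^ i * (K : ℝ)) ^ θ₁ *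
        (Real.sqrt (((2 : ℝ) ^ i * (K : ℝ)) ^ 2 + 1)) ^ θ₂ *
        Real.exp (-t) *
        (1 - Real.exp (-((((2 : ℝ) ^ i * (K : ℝ)) ^ (2 * α₂) +
          (Real.sqrt (((2 : ℝ) ^ i * (K : ℝ)) ^ 2 + 1)) ^ (2 * α₂)) - 1) * t)) /
        ((((2 : ℝ) ^ i * (K : ℝ)) ^ (2 * α₂) +
          (Real.sqrt (((2 : ℝ) ^ i * (K : ℝ)) ^ 2 + 1)) ^ (2 * α₂)) - 1) with hS_def
    have hSl : (r:ℝ) * c₀ ≤ S := by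
      have h := Finset.card_nsmul_le_sum (Finset.range r) _ c₀ hterm
      rw [Finset.card_range, nsmul_eq_mul] at h
      exact h
    have hS0 : 0 ≤ S := le_trans (by positivity) hSl
    set M := (r:ℝ) ^ (-(β₁ + β₂)) / 2 * S with hM_def
    have hub : ∀ x : Fin 3 → ℝ, |b10 θ₁ θ₂ α₂ K r β₁ β₂ t x| ≤ M := by
      intro x
      rw [b10, abs_neg, abs_mul, abs_mul, abs_of_nonneg hP0]
      rw [← hS_def, abs_of_nonneg hS0]
      calc (r:ℝ) ^ (-(β₁ + β₂)) / 2 * S * |Real.sin (x 2)|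
          ≤ (r:ℝ) ^ (-(β₁ + β₂)) / 2 * S * 1 :=
            mul_le_mul_of_nonneg_left (abs_le.mpr ⟨by linarith [Real.neg_one_le_sin (x 2)], Real.sin_le_one (x 2)⟩) (by positivity)
        _ = M := mul_one _
    have hbdd : BddAbove (Set.range fun x : Fin 3 → ℝ =>
        |b10 θ₁ θ₂ α₂ K r β₁ β₂ t x|) := ⟨M, by rintro y ⟨x, rfl⟩; exact hub x⟩
    have hval : |b10 θ₁ θ₂ α₂ K r β₁ β₂ t (fun _ => Real.pi / 2)| = M := by
      rw [b10, abs_neg]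
      show |(r:ℝ) ^ (-(β₁ + β₂)) / 2 * S * Real.sin (Real.pi / 2)| = M
      rw [Real.sin_pi_div_two, mul_one, abs_of_nonneg (by positivity)]
    calc c₀ / 2 * (r:ℝ) ^ (1 - β₁ - β₂) = (r:ℝ) ^ (-(β₁ + β₂)) / 2 * ((r:ℝ) * c₀) := by
          rw [← hrpow]; ring
      _ ≤ M := mul_le_mul_of_nonneg_left hSl hP0
      _ = |b10 θ₁ θ₂ α₂ K r β₁ β₂ t (fun _ => Real.pi / 2)| := hval.symm
      _ ≤ ⨆ x : Fin 3 → ℝ, |b10 θ₁ θ₂ α₂ K r β₁ β₂ t x| := le_ciSup hbdd _
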